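/- arXiv:1711.04961 — 3 statements merged into one kernel-verified Lean document; each statement's English description precedes it below -/
import Mathlib

section
/- Given positive reals r1, r2 and a real z with z² ≠ 1, the distance between the point ((r1−r2)/(z²−1), 2z√(r1r2)/(z²−1)) (the center of the circle of radius |r1+r2|/|z²−1|) and the point (−r1, 0) (the center of the circle of radius r1) equals |r1 + (r1+r2)/(z²−1)|. -/
theorem stmt_3 (r1 r2 z : ℝ) (h1 : 0 < r1) (h2 : 0 < r2) (hz : z^2 ≠ 1) :
    Real.sqrt (((r1 - r2)/(z^2 - 1) - (-r1))^2 + (2*z*Real.sqrt (r1*r2)/(z^2 - 1) - 0)^2)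
      = |r1 + (r1 + r2)/(z^2 - 1)| := by
  have hd : z^2 - 1 ≠ 0 := sub_ne_zero.mpr hz
  have hs : Real.sqrt (r1*r2)^2 = r1*r2 := Real.sq_sqrt (by positivity)
  have key : ((r1 - r2)/(z^2 - 1) - (-r1))^2 + (2*z*Real.sqrt (r1*r2)/(z^2 - 1) - 0)^2
      = (r1 + (r1 + r2)/(z^2 - 1))^2 := by
    have ha : Real.sqrt r1^2 = r1 := Real.sq_sqrt h1.le
    have hb : Real.sqrt r2^2 = r2 := Real.sq_sqrt h2.le
    field_simp
    linear_combination (4*z^2)*hs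
  rw [key, Real.sqrt_sq_eq_abs]
end

section
/- Given positive reals r1, r2 and a real z with z² ≠ 1, the distance between the points ((r1−r2)/(z²−1), 2z√(r1r2)/(z²−1)) and (r2, 0) equals |r2 + (r1+r2)/(z²−1)|, i.e., the circle of Okumura–Watanabe's Theorem 7 is tangent to the circle C2 of center (r2,0) and radius r2. -/
/-! Clearing the denominator `z² - 1`, the claim reduces to the identity
`(r₁ - r₂z²)² + 4z²r₁r₂ = (r₁ + r₂z²)²`, an instance of `(a - b)² + 4ab = (a + b)²`. -/

lemma sq_sub_add_sq_eq_sq_add {a b s z : ℝ} (hs : s ^ 2 = a * b) :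
    (a - b * z ^ 2) ^ 2 + (2 * z * s) ^ 2 = (a + b * z ^ 2) ^ 2 := by
  rw [mul_pow, hs]
  ring

lemma okumura_watanabe_dist_sq {r₁ r₂ s z : ℝ} (hz : z ^ 2 ≠ 1) (hs : s ^ 2 = r₁ * r₂) :
    ((r₁ - r₂) / (z ^ 2 - 1) - r₂) ^ 2 + (2 * z * s / (z ^ 2 - 1)) ^ 2
      = (r₂ + (r₁ + r₂) / (z ^ 2 - 1)) ^ 2 := by
  have hd : z ^ 2 - 1 ≠ 0 := sub_ne_zero.mpr hz
  have hx : (r₁ - r₂) / (z ^ 2 - 1) - r₂ = (r₁ - r₂ * z ^ 2) / (z ^ 2 - 1) := by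
    field_simp
    ring
  have hr : r₂ + (r₁ + r₂) / (z ^ 2 - 1) = (r₁ + r₂ * z ^ 2) / (z ^ 2 - 1) := by
    field_simp
    ring
  rw [hx, hr, div_pow, div_pow, div_pow, ← add_div, sq_sub_add_sq_eq_sq_add hs]

theorem stmt_4 (r1 r2 z : ℝ) (h1 : 0 < r1) (h2 : 0 < r2) (hz : z^2 ≠ 1) :
    Real.sqrt (((r1 - r2)/(z^2 - 1) - r2)^2 + (2*z*Real.sqrt (r1*r2)/(z^2 - 1) - 0)^2)
      = |r2 + (r1 + r2)/(z^2 - 1)| := by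
  have hs : Real.sqrt (r1 * r2) ^ 2 = r1 * r2 := Real.sq_sqrt (by positivity)
  rw [sub_zero, okumura_watanabe_dist_sq hz hs, Real.sqrt_sq_eq_abs]
end

section
/- For positive reals r1, r2 and real w with D = r1r2 + 2√(r1r2)(r1+r2)w + (r1²+r1r2+r2²)w² ≠ 0, the circle with center (x4, y4) = (r1r2(r1−r2)w²/D, 2r1r2(√(r1r2) + (r1+r2)w)w/D) and radius r4 = r1r2(r1+r2)w²/D satisfies: the distance from (x4, y4) to (−r1, 0) equals |r1 + r4| when the tangency is external, i.e., dist((x4,y4),(−r1,0))² = (r1 + r4)². -/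
/-! Writing `s = √(r₁r₂)`, clearing the denominator `D` turns the claim into a polynomial identity
in `r₁, r₂, w, s` that holds modulo `s² = r₁r₂`. -/

theorem tangency_identity_of_sq_eq_mul {K : Type*} [Field K] {r1 r2 s w D : K}
    (hs : s ^ 2 = r1 * r2) (hD : D = r1*r2 + 2*s*(r1 + r2)*w + (r1^2 + r1*r2 + r2^2)*w^2)
    (hD0 : D ≠ 0) :
    (r1*r2*(r1 - r2)*w^2 / D + r1)^2 + (2*r1*r2*(s + (r1 + r2)*w)*w / D)^2
      = (r1 + r1*r2*(r1 + r2)*w^2 / D)^2 := by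
  field_simp
  subst hD
  linear_combination (4*r1^2*r2^2*w^2) * hs

theorem stmt_14 (r1 r2 w : ℝ) (h1 : 0 < r1) (h2 : 0 < r2)
    (hD : r1*r2 + 2*Real.sqrt (r1*r2)*(r1 + r2)*w + (r1^2 + r1*r2 + r2^2)*w^2 ≠ 0) :
    let D := r1*r2 + 2*Real.sqrt (r1*r2)*(r1 + r2)*w + (r1^2 + r1*r2 + r2^2)*w^2
    let x4 := r1*r2*(r1 - r2)*w^2/D
    let y4 := 2*r1*r2*(Real.sqrt (r1*r2) + (r1 + r2)*w)*w/D
    let r4 := r1*r2*(r1 + r2)*w^2/D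
    (x4 - (-r1))^2 + (y4 - 0)^2 = (r1 + r4)^2 := by
  intro D x4 y4 r4
  rw [sub_neg_eq_add, sub_zero]
  exact tangency_identity_of_sq_eq_mul (Real.sq_sqrt (by positivity)) rfl hD
end
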